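/- arXiv:math/0612381 — 3 statements merged into one kernel-verified Lean document; each statement's English description precedes it below -/
import Mathlib

section
/- Let x : ℝ → ℝ be the solution of ẋ = -ρx + υ(t) with ρ > 0, x(t₀) = x₀, where υ : ℝ → ℝ is continuous and satisfies ‖υ‖_{∞,[t₀,t]} ≤ Δ_u + ‖υ₀‖_{∞,[t₀,t]} for all t ≥ t₀. Then |x(t)| - Δ_u/ρ ≤ e^{-ρ(t-t₀)}·max(|x₀| - Δ_u/ρ, 0) + (1/ρ)·‖υ₀‖_{∞,[t₀,t]} for all t ≥ t₀. -/
/-!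
Variation of constants bounds `|x t|` by `e^{-ρ(t-t₀)} |x₀| + (1 - e^{-ρ(t-t₀)}) S / ρ`, where
`S` is the sup of `|υ|` on `[t₀, t]`. Inserting `S ≤ Δu + S₀`, the `Δu`-part of the forcing term
combines with `-Δu/ρ` into `-e^{-ρ(t-t₀)} Δu/ρ`, and the remaining `S₀`-part is at most `S₀ / ρ`.
-/

noncomputable def supNormOn (f : ℝ → ℝ) (a b : ℝ) : ℝ :=
  sSup ((fun τ => |f τ|) '' Set.Icc a b)

open Real Set intervalIntegral

/-- Holds without any boundedness assumption: an unbounded set has junk supremum `0`. -/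
theorem supNormOn_nonneg (f : ℝ → ℝ) (a b : ℝ) : 0 ≤ supNormOn f a b :=
  Real.sSup_nonneg <| by
    rintro _ ⟨τ, -, rfl⟩
    exact abs_nonneg _

theorem abs_le_supNormOn {f : ℝ → ℝ} {a b τ : ℝ} (hf : ContinuousOn f (Icc a b))
    (hτ : τ ∈ Icc a b) : |f τ| ≤ supNormOn f a b :=
  le_csSup (isCompact_Icc.image_of_continuousOn hf.abs).bddAbove ⟨τ, hτ, rfl⟩

theorem integral_exp_neg_mul_sub {ρ : ℝ} (hρ : ρ ≠ 0) (t₀ t : ℝ) :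
    ∫ τ in t₀..t, exp (-ρ * (t - τ)) = (1 - exp (-ρ * (t - t₀))) / ρ := by
  have hderiv : ∀ τ ∈ uIcc t₀ t,
      HasDerivAt (fun s => exp (-ρ * (t - s)) / ρ) (exp (-ρ * (t - τ))) τ := by
    intro τ _
    have hlin : HasDerivAt (fun s : ℝ => -ρ * (t - s)) ρ τ := by
      simpa using ((hasDerivAt_id τ).const_sub t).const_mul (-ρ)
    simpa [mul_div_cancel_right₀ _ hρ] using hlin.exp.div_const ρ
  rw [integral_eq_sub_of_hasDerivAt hderiv (Continuous.intervalIntegrable (by fun_prop) _ _)]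
  simp [sub_div]

theorem abs_integral_exp_mul_le {ρ t₀ t : ℝ} {υ : ℝ → ℝ} (hρ : ρ ≠ 0) (ht : t₀ ≤ t)
    (hυ : ContinuousOn υ (Icc t₀ t)) :
    |∫ τ in t₀..t, exp (-ρ * (t - τ)) * υ τ|
      ≤ supNormOn υ t₀ t * ((1 - exp (-ρ * (t - t₀))) / ρ) := by
  calc |∫ τ in t₀..t, exp (-ρ * (t - τ)) * υ τ|
      ≤ ∫ τ in t₀..t, exp (-ρ * (t - τ)) * supNormOn υ t₀ t := by
        rw [← Real.norm_eq_abs]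
        refine norm_integral_le_of_norm_le ht (Filter.Eventually.of_forall fun τ hτ => ?_)
          (Continuous.intervalIntegrable (by fun_prop) _ _)
        rw [Real.norm_eq_abs, abs_mul, abs_of_pos (exp_pos _)]
        exact mul_le_mul_of_nonneg_left (abs_le_supNormOn hυ (Ioc_subset_Icc_self hτ))
          (exp_pos _).le
    _ = supNormOn υ t₀ t * ((1 - exp (-ρ * (t - t₀))) / ρ) := by
        rw [integral_mul_const, integral_exp_neg_mul_sub hρ, mul_comm]

theorem abs_le_of_variation_of_constants {ρ t₀ t x₀ : ℝ} {x υ : ℝ → ℝ} (hρ : ρ ≠ 0)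
    (ht : t₀ ≤ t) (hυ : ContinuousOn υ (Icc t₀ t))
    (hsol : x t = exp (-ρ * (t - t₀)) * x₀ + ∫ τ in t₀..t, exp (-ρ * (t - τ)) * υ τ) :
    |x t| ≤ exp (-ρ * (t - t₀)) * |x₀|
      + supNormOn υ t₀ t * ((1 - exp (-ρ * (t - t₀))) / ρ) := by
  rw [hsol]
  calc _ ≤ |exp (-ρ * (t - t₀)) * x₀| + |∫ τ in t₀..t, exp (-ρ * (t - τ)) * υ τ| :=
        abs_add_le _ _
    _ ≤ _ := by
        rw [abs_mul, abs_of_pos (exp_pos _)]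
        exact add_le_add_right (abs_integral_exp_mul_le hρ ht hυ) _

theorem stmt1_general (ρ Δu t₀ x₀ : ℝ) (x υ υ₀ : ℝ → ℝ)
    (hρ : 0 < ρ)
    (hυcont : Continuous υ)
    (hυbound : ∀ t, t₀ ≤ t → supNormOn υ t₀ t ≤ Δu + supNormOn υ₀ t₀ t)
    (hsol : ∀ t, x t = Real.exp (-ρ * (t - t₀)) * x₀
      + ∫ τ in t₀..t, Real.exp (-ρ * (t - τ)) * υ τ) :
    ∀ t, t₀ ≤ t →
      |x t| - Δu / ρ ≤
        Real.exp (-ρ * (t - t₀)) * max (|x₀| - Δu / ρ) 0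
          + (1 / ρ) * supNormOn υ₀ t₀ t := by
  intro t ht
  have hx := abs_le_of_variation_of_constants hρ.ne' ht hυcont.continuousOn (hsol t)
  set E := exp (-ρ * (t - t₀))
  set S₀ := supNormOn υ₀ t₀ t
  have hE : 0 < E := exp_pos _
  have hE1 : E ≤ 1 := exp_le_one_iff.mpr (by nlinarith)
  have hforcing : supNormOn υ t₀ t * ((1 - E) / ρ) ≤ (Δu + S₀) * ((1 - E) / ρ) :=
    mul_le_mul_of_nonneg_right (hυbound t ht) (div_nonneg (by linarith) hρ.le)
  have hS₀ : S₀ * ((1 - E) / ρ) ≤ 1 / ρ * S₀ := by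
    rw [mul_comm]
    gcongr
    · exact supNormOn_nonneg υ₀ t₀ t
    · linarith
  calc |x t| - Δu / ρ ≤ E * (|x₀| - Δu / ρ) + S₀ * ((1 - E) / ρ) := by
        have hcancel : (Δu + S₀) * ((1 - E) / ρ) - Δu / ρ = S₀ * ((1 - E) / ρ) - E * (Δu / ρ) := by ring
        linarith
    _ ≤ E * max (|x₀| - Δu / ρ) 0 + 1 / ρ * S₀ := by
        gcongr
        exact le_max_left _ _

theorem stmt1 (ρ Δu t₀ x₀ : ℝ) (x υ υ₀ : ℝ → ℝ)
    (hρ : 0 < ρ) (hΔ : 0 ≤ Δu)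
    (hυcont : Continuous υ)
    (hυ₀bdd : ∃ M, ∀ τ, |υ₀ τ| ≤ M)
    (hυbound : ∀ t, t₀ ≤ t → supNormOn υ t₀ t ≤ Δu + supNormOn υ₀ t₀ t)
    (hx0 : x t₀ = x₀)
    (hsol : ∀ t, x t = Real.exp (-ρ * (t - t₀)) * x₀
      + ∫ τ in t₀..t, Real.exp (-ρ * (t - τ)) * υ τ) :
    ∀ t, t₀ ≤ t →
      |x t| - Δu / ρ ≤
        Real.exp (-ρ * (t - t₀)) * max (|x₀| - Δu / ρ) 0
          + (1 / ρ) * supNormOn υ₀ t₀ t :=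
  stmt1_general ρ Δu t₀ x₀ x υ υ₀ hρ hυcont hυbound hsol
end

section
/- Consider the interconnection where x : [t₀,∞) → ℝ≥0 and h : [t₀,∞) → ℝ satisfy: (i) x(t) ≤ β(x(s), t-s) + c·sup_{τ∈[s,t]}|h(τ)| for all t ≥ s ≥ t₀, with β ∈ 𝒦ℒ and c > 0; (ii) h is nonincreasing and h(s) - h(t) ≤ ∫_s^t γ₀(x(τ))dτ for all t ≥ s ≥ t₀. If h(t) ∈ [0, h(t₀)] for all t ≥ t₀, then limsup_{t→∞} x(t) ≤ c·h(t₀). -/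
theorem stmt11 (t₀ c : ℝ) (x h γ₀ : ℝ → ℝ) (β : ℝ → ℝ → ℝ)
    (hc : 0 < c)
    (hxnonneg : ∀ t, t₀ ≤ t → 0 ≤ x t)
    -- β ∈ 𝒦ℒ
    (hβK : StrictMonoOn (fun s => β s 0) (Set.Ici 0))
    (hβKcont : ContinuousOn (fun s => β s 0) (Set.Ici 0))
    (hβK0 : β 0 0 = 0)
    (hβnonneg : ∀ s t, 0 ≤ s → 0 ≤ t → 0 ≤ β s t)
    (hβanti : ∀ s, 0 ≤ s → AntitoneOn (fun t => β s t) (Set.Ici 0))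
    (hβlim : ∀ s, 0 ≤ s → Filter.Tendsto (fun t => β s t) Filter.atTop (nhds 0))
    -- γ₀ ∈ 𝒦
    (hγmono : StrictMonoOn γ₀ (Set.Ici 0))
    (hγcont : ContinuousOn γ₀ (Set.Ici 0))
    (hγ0 : γ₀ 0 = 0)
    -- (i) contracting dynamics
    (hSa : ∀ s t, t₀ ≤ s → s ≤ t →
      x t ≤ β (x s) (t - s) + c * sSup ((fun τ => |h τ|) '' Set.Icc s t))
    -- (ii) wandering dynamics
    (hhanti : AntitoneOn h (Set.Ici t₀))
    (hSw : ∀ s t, t₀ ≤ s → s ≤ t → h s - h t ≤ ∫ τ in s..t, γ₀ (x τ))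
    -- h stays in [0, h(t₀)]
    (hhbdd : ∀ t, t₀ ≤ t → h t ∈ Set.Icc 0 (h t₀)) :
    Filter.limsup x Filter.atTop ≤ c * h t₀ := by
  set g : ℝ → ℝ := fun t => β (x t₀) (t - t₀) + c * h t₀ with hg
  have hxb : ∀ t, t₀ ≤ t → x t ≤ g t := by
    intro t ht
    have hsup : sSup ((fun τ => |h τ|) '' Set.Icc t₀ t) ≤ h t₀ := by
      apply Real.sSup_le
      · rintro y ⟨τ, hτ, rfl⟩
        have h2 := hhbdd τ hτ.1
        simpa [abs_of_nonneg h2.1] using h2.2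
      · exact (hhbdd t₀ le_rfl).1
    calc x t ≤ β (x t₀) (t - t₀) + c * sSup ((fun τ => |h τ|) '' Set.Icc t₀ t) :=
          hSa t₀ t le_rfl ht
      _ ≤ g t := by
          have := mul_le_mul_of_nonneg_left hsup hc.le
          simp only [hg]; linarith
  have hgt : Filter.Tendsto g Filter.atTop (nhds (c * h t₀)) := by
    have h1 : Filter.Tendsto (fun t : ℝ => t - t₀) Filter.atTop Filter.atTop :=
      Filter.tendsto_atTop_add_const_right _ _ Filter.tendsto_id
    have := (hβlim (x t₀) (hxnonneg t₀ le_rfl)).comp h1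
    have : Filter.Tendsto (fun t => β (x t₀) (t - t₀) + c * h t₀) Filter.atTop
        (nhds (0 + c * h t₀)) := this.add_const _
    simpa using this
  have hle : Filter.limsup x Filter.atTop ≤ Filter.limsup g Filter.atTop := by
    apply Filter.limsup_le_limsup
    · filter_upwards [Filter.eventually_ge_atTop t₀] with t ht using hxb t ht
    · exact Filter.isCoboundedUnder_le_of_eventually_le _
        (by filter_upwards [Filter.eventually_ge_atTop t₀] with t ht using hxnonneg t ht)
    · exact hgt.isBoundedUnder_le
  calc Filter.limsup x Filter.atTop ≤ Filter.limsup g Filter.atTop := hle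
    _ = c * h t₀ := hgt.limsup_eq
end

section
/- Consider the planar system ẋ₁ = -λ₁x₁ + c₁x₂, ẋ₂ = -c₂|x₁| with λ₁, c₁, c₂ > 0 satisfying (c₁/λ₁)·(c₂/λ₁) < 1/16. Then there exist a pair (x₁(t₀), x₂(t₀)) with x₂(t₀) > 0 and a nonempty set of initial conditions {(x₁⁰, x₂⁰) : x₂⁰ > 0, |x₁⁰| ≤ C·x₂⁰} with C > 0 such that for all initial conditions in this set the solution satisfies x₂(t) ∈ [0, x₂(t₀)] for all t ≥ t₀ and x₁(t) → 0, x₂(t) → x̄ for some x̄ ∈ [0, x₂(t₀)] as t → ∞. -/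
/-!
Take `K = λ₁ / (2 c₂)`. The hypothesis gives `λ₁ K - c₁ - c₂ K² > 0`, which says that on the
boundary `|x₁| = K x₂` (with `x₂ > 0`) of the cone the vector field points strictly inwards, so
the cone `|x₁| ≤ K x₂` is forward invariant. Inside it `x₂` is nonincreasing and nonnegative,
hence converges to some `x̄ ≥ 0`. If `x̄ > 0`, then `x₁ - (λ₁ / c₂) x₂` would grow at least like
`c₁ x̄ t`, contradicting `x₁ ≤ K x₂(t₀)`; so `x̄ = 0`, and `|x₁| ≤ K x₂` forces `x₁ → 0`.
-/

open Filter Set Topology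

theorem HasDerivWithinAt.eventually_nhdsGT_lt_of_neg {f : ℝ → ℝ} {f' x : ℝ}
    (hf : HasDerivWithinAt f f' (Ici x) x) (hf' : f' < 0) : ∀ᶠ t in 𝓝[>] x, f t < f x := by
  filter_upwards [hf.Ioi_of_Ici.limsup_slope_le' (lt_irrefl x) hf', self_mem_nhdsWithin]
    with t hslope hxt
  rwa [slope_def_field, div_lt_iff₀ (sub_pos.2 hxt), zero_mul, sub_neg] at hslope

theorem image_nonpos_of_deriv_right_neg_boundary {ι : Type*} [Finite ι] {u : ι → ℝ → ℝ}
    {t₀ : ℝ} (hu : ∀ i, ContinuousOn (u i) (Ici t₀)) (h₀ : ∀ i, u i t₀ ≤ 0)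
    (boundary : ∀ t, t₀ ≤ t → (∀ j, u j t ≤ 0) → ∀ i, u i t = 0 →
      ∃ d < 0, HasDerivWithinAt (u i) d (Ici t) t) :
    ∀ t, t₀ ≤ t → ∀ i, u i t ≤ 0 := by
  intro t ht
  set s : Set ℝ := {x | ∀ i, u i x ≤ 0}
  have hclosed : IsClosed (s ∩ Icc t₀ t) := by
    have : s ∩ Icc t₀ t = Icc t₀ t ∩ ⋂ i, Icc t₀ t ∩ u i ⁻¹' Iic 0 := by
      ext x; simp only [s, mem_inter_iff, mem_ofPred_eq, mem_iInter, mem_preimage, mem_Iic]; grind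
    rw [this]
    exact isClosed_Icc.inter <| isClosed_iInter fun i =>
      ((hu i).mono Icc_subset_Ici_self).preimage_isClosed_of_isClosed isClosed_Icc isClosed_Iic
  have hgt : ∀ x ∈ s ∩ Ico t₀ t, s ∈ 𝓝[>] x := by
    rintro x ⟨hxs, hx₀, -⟩
    refine eventually_all.2 fun i => ?_
    rcases (hxs i).lt_or_eq with hneg | hzero
    · have hcont : ContinuousWithinAt (u i) (Ioi x) x :=
        (hu i x hx₀).mono (Ioi_subset_Ici_self.trans (Ici_subset_Ici.2 hx₀))
      filter_upwards [hcont.eventually (gt_mem_nhds hneg)] with y hy using hy.le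
    · obtain ⟨d, hd, hderiv⟩ := boundary x hx₀ hxs i hzero
      filter_upwards [hderiv.eventually_nhdsGT_lt_of_neg hd] with y hy
      exact (hy.trans_eq hzero).le
  exact hclosed.Icc_subset_of_forall_mem_nhdsWithin h₀ hgt ⟨ht, le_rfl⟩

theorem monotoneOn_Ici_of_hasDerivAt_nonneg {f f' : ℝ → ℝ} {a : ℝ}
    (hf : ∀ t, a ≤ t → HasDerivAt f (f' t) t) (hf' : ∀ t, a ≤ t → 0 ≤ f' t) :
    MonotoneOn f (Ici a) :=
  monotoneOn_of_hasDerivWithinAt_nonneg (convex_Ici a)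
    (fun t ht => (hf t ht).continuousAt.continuousWithinAt)
    (fun t ht => (hf t (interior_subset ht)).hasDerivWithinAt)
    (fun t ht => hf' t (interior_subset ht))

theorem antitoneOn_Ici_of_hasDerivAt_nonpos {f f' : ℝ → ℝ} {a : ℝ}
    (hf : ∀ t, a ≤ t → HasDerivAt f (f' t) t) (hf' : ∀ t, a ≤ t → f' t ≤ 0) :
    AntitoneOn f (Ici a) := fun _ hs _ ht hst =>
  neg_le_neg_iff.1 <| monotoneOn_Ici_of_hasDerivAt_nonneg (fun t ht => (hf t ht).neg)
    (fun t ht => neg_nonneg.2 (hf' t ht)) hs ht hst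

theorem tendsto_atTop_of_le_deriv {f f' : ℝ → ℝ} {a m : ℝ} (hm : 0 < m)
    (hf : ∀ t, a ≤ t → HasDerivAt f (f' t) t) (hf' : ∀ t, a ≤ t → m ≤ f' t) :
    Tendsto f atTop atTop := by
  have hmono : MonotoneOn (fun t => f t - m * t) (Ici a) :=
    monotoneOn_Ici_of_hasDerivAt_nonneg (fun t ht => (hf t ht).sub ((hasDerivAt_id t).const_mul m))
      (fun t ht => by simpa using hf' t ht)
  have hlin : Tendsto (fun t => f a + m * (t - a)) atTop atTop :=
    tendsto_atTop_add_const_left _ _ <|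
      (tendsto_atTop_add_const_right _ _ tendsto_id).const_mul_atTop hm
  refine tendsto_atTop_mono' _ ?_ hlin
  filter_upwards [eventually_ge_atTop a] with t ht
  have := hmono self_mem_Ici ht ht
  linarith

theorem AntitoneOn.exists_tendsto_atTop_of_le {f : ℝ → ℝ} {a b : ℝ} (hf : AntitoneOn f (Ici a))
    (hb : ∀ t, a ≤ t → b ≤ f t) :
    ∃ l, b ≤ l ∧ (∀ t, a ≤ t → l ≤ f t) ∧ Tendsto f atTop (𝓝 l) := by
  set g : ℝ → ℝ := fun t => f (max t a)
  have hg : Antitone g := fun s t hst =>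
    hf (le_max_right s a) (le_max_right t a) (max_le_max_right a hst)
  have hgb : ∀ t, b ≤ g t := fun t => hb _ (le_max_right t a)
  have hbdd : BddBelow (range g) := ⟨b, forall_mem_range.2 hgb⟩
  refine ⟨⨅ t, g t, le_ciInf hgb, fun t ht => ?_, (tendsto_atTop_ciInf hg hbdd).congr' ?_⟩
  · simpa [g, max_eq_left ht] using ciInf_le hbdd t
  · filter_upwards [eventually_ge_atTop a] with t ht
    simp [g, max_eq_left ht]

section PlanarSystem

variable {lam₁ c₁ c₂ K t₀ : ℝ} {x₁ x₂ : ℝ → ℝ}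

theorem sign_mul_field_sub_neg_of_abs_eq {a b : ℝ} (hc₁ : 0 < c₁)
    (hKcone : 0 < lam₁ * K - c₁ - c₂ * K ^ 2) (hb : 0 < b) (hab : |a| = K * b) :
    SignType.sign a * (-lam₁ * a + c₁ * b) - K * (-c₂ * |a|) < 0 := by
  have hsign : (SignType.sign a : ℝ) * a = |a| := sign_mul_self a
  have hsign_le : (SignType.sign a : ℝ) ≤ 1 := by cases SignType.sign a <;> norm_num
  have hderiv : SignType.sign a * (-lam₁ * a + c₁ * b) - K * (-c₂ * |a|)
      = -(lam₁ * K - c₁ - c₂ * K ^ 2) * b + (SignType.sign a - 1) * (c₁ * b) := by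
    linear_combination (-lam₁) * hsign + (K * c₂ - lam₁) * hab
  rw [hderiv]
  nlinarith [mul_le_mul_of_nonneg_right hsign_le (mul_pos hc₁ hb).le, mul_pos hKcone hb]

theorem abs_le_mul_of_initial (hc₁ : 0 < c₁) (hc₂ : 0 < c₂) (hK : 0 < K)
    (hKcone : 0 < lam₁ * K - c₁ - c₂ * K ^ 2)
    (hx₁ : ∀ t, t₀ ≤ t → HasDerivAt x₁ (-lam₁ * x₁ t + c₁ * x₂ t) t)
    (hx₂ : ∀ t, t₀ ≤ t → HasDerivAt x₂ (-c₂ * |x₁ t|) t)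
    (h₀ : 0 < x₂ t₀) (hinit : |x₁ t₀| ≤ K * x₂ t₀) :
    ∀ t, t₀ ≤ t → |x₁ t| ≤ K * x₂ t := by
  -- Since `x₂' ≥ -c₂ K x₂` in the cone, `x₂` stays above this decaying exponential, which keeps
  -- `x₂` positive and hence the boundary of the cone away from the origin.
  set floor : ℝ → ℝ := fun t => x₂ t₀ * Real.exp (-(2 * c₂ * K) * (t - t₀))
  have hfloor : ∀ t, HasDerivAt floor (-(2 * c₂ * K) * floor t) t := fun t => by
    have hlin : HasDerivAt (fun s => -(2 * c₂ * K) * (s - t₀)) (-(2 * c₂ * K)) t := by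
      simpa using ((hasDerivAt_id t).sub_const t₀).const_mul (-(2 * c₂ * K))
    exact (hlin.exp.const_mul (x₂ t₀)).congr_deriv (by ring)
  have hfloor_pos : ∀ t, 0 < floor t := fun t => by positivity
  have hx₂cont : ContinuousOn x₂ (Ici t₀) := fun t ht => (hx₂ t ht).continuousAt.continuousWithinAt
  have hx₁cont : ContinuousOn x₁ (Ici t₀) := fun t ht => (hx₁ t ht).continuousAt.continuousWithinAt
  have key := image_nonpos_of_deriv_right_neg_boundary
    (u := ![fun t => |x₁ t| - K * x₂ t, fun t => floor t - x₂ t]) (t₀ := t₀)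
    (by
      simp only [Fin.forall_fin_two, Matrix.cons_val_zero, Matrix.cons_val_one]
      exact ⟨hx₁cont.abs.sub (continuousOn_const.mul hx₂cont),
        ContinuousOn.sub (fun t _ => (hfloor t).continuousAt.continuousWithinAt) hx₂cont⟩)
    (by simpa [floor] using hinit)
    (by
      intro t ht hin
      simp only [Fin.forall_fin_two, Matrix.cons_val_zero, Matrix.cons_val_one, sub_nonpos] at hin ⊢
      obtain ⟨hcone, hx₂floor⟩ := hin
      have hx₂pos : 0 < x₂ t := (hfloor_pos t).trans_le hx₂floor
      refine ⟨fun hedge => ?_, fun hfl => ?_⟩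
      · have hx₁ne : x₁ t ≠ 0 := by
          intro h; rw [h, abs_zero] at hedge; nlinarith
        exact ⟨_, sign_mul_field_sub_neg_of_abs_eq hc₁ hKcone hx₂pos (by linarith),
          (((hasDerivAt_abs hx₁ne).comp t (hx₁ t ht)).sub ((hx₂ t ht).const_mul K)).hasDerivWithinAt⟩
      · refine ⟨_, ?_, ((hfloor t).sub (hx₂ t ht)).hasDerivWithinAt⟩
        nlinarith [mul_pos hc₂ hK])
  intro t ht
  simpa [sub_nonpos] using key t ht 0

theorem nonpos_of_le_x₂_of_x₁_le (hlam₁ : 0 ≤ lam₁) (hc₁ : 0 < c₁) (hc₂ : 0 < c₂) {B l : ℝ}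
    (hx₁ : ∀ t, t₀ ≤ t → HasDerivAt x₁ (-lam₁ * x₁ t + c₁ * x₂ t) t)
    (hx₂ : ∀ t, t₀ ≤ t → HasDerivAt x₂ (-c₂ * |x₁ t|) t)
    (hx₁B : ∀ t, t₀ ≤ t → x₁ t ≤ B) (hlx₂ : ∀ t, t₀ ≤ t → l ≤ x₂ t) :
    l ≤ 0 := by
  by_contra! hl
  -- `x₁ - (λ₁ / c₂) x₂` has derivative `λ₁ (|x₁| - x₁) + c₁ x₂ ≥ c₁ l`, yet stays below `B`.
  have hW := tendsto_atTop_of_le_deriv (mul_pos hc₁ hl)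
    (fun t ht => (hx₁ t ht).sub ((hx₂ t ht).const_mul (lam₁ / c₂))) fun t ht => ?_
  · obtain ⟨t, hBt, ht⟩ := (hW.eventually_gt_atTop B).and (eventually_ge_atTop t₀) |>.exists
    have : 0 ≤ lam₁ / c₂ * x₂ t := mul_nonneg (div_nonneg hlam₁ hc₂.le) (hl.le.trans (hlx₂ t ht))
    simp only [Pi.sub_apply] at hBt
    linarith [hx₁B t ht]
  · have hcancel : lam₁ / c₂ * (-c₂ * |x₁ t|) = -(lam₁ * |x₁ t|) := by field_simp
    rw [hcancel]
    nlinarith [hlx₂ t ht, mul_le_mul_of_nonneg_left (le_abs_self (x₁ t)) hlam₁]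

end PlanarSystem

theorem stmt15 (lam₁ c₁ c₂ t₀ : ℝ)
    (hlam₁ : 0 < lam₁) (hc₁ : 0 < c₁) (hc₂ : 0 < c₂)
    (hsg : (c₁ / lam₁) * (c₂ / lam₁) < 1 / 16) :
    ∃ C > (0 : ℝ),
      (∃ p : ℝ × ℝ, 0 < p.2 ∧ |p.1| ≤ C * p.2) ∧
      ∀ x₁ x₂ : ℝ → ℝ,
        (∀ t, t₀ ≤ t → HasDerivAt x₁ (-lam₁ * x₁ t + c₁ * x₂ t) t) →
        (∀ t, t₀ ≤ t → HasDerivAt x₂ (-c₂ * |x₁ t|) t) →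
        0 < x₂ t₀ → |x₁ t₀| ≤ C * x₂ t₀ →
        (∀ t, t₀ ≤ t → x₂ t ∈ Set.Icc 0 (x₂ t₀)) ∧
        Filter.Tendsto x₁ Filter.atTop (nhds 0) ∧
        ∃ xbar ∈ Set.Icc 0 (x₂ t₀),
          Filter.Tendsto x₂ Filter.atTop (nhds xbar) := by
  set K := lam₁ / (2 * c₂)
  have hK : 0 < K := by positivity
  have hKcone : 0 < lam₁ * K - c₁ - c₂ * K ^ 2 := by
    have hsg' : 16 * (c₁ * c₂) < lam₁ ^ 2 := by
      rw [div_mul_div_comm, div_lt_div_iff₀ (by positivity) (by norm_num)] at hsg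
      linarith
    have hval : lam₁ * K - c₁ - c₂ * K ^ 2 = (lam₁ ^ 2 - 4 * (c₁ * c₂)) / (4 * c₂) := by
      simp only [K]; field_simp; ring
    rw [hval]
    exact div_pos (by nlinarith [mul_pos hc₁ hc₂]) (by positivity)
  refine ⟨K, hK, ⟨(0, 1), one_pos, by simpa using hK.le⟩, fun x₁ x₂ hx₁ hx₂ h₀ hinit => ?_⟩
  have hcone := abs_le_mul_of_initial hc₁ hc₂ hK hKcone hx₁ hx₂ h₀ hinit
  have hx₂_nonneg : ∀ t, t₀ ≤ t → 0 ≤ x₂ t := fun t ht =>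
    nonneg_of_mul_nonneg_right ((abs_nonneg _).trans (hcone t ht)) hK
  have hanti : AntitoneOn x₂ (Ici t₀) := antitoneOn_Ici_of_hasDerivAt_nonpos hx₂
    fun t _ => mul_nonpos_of_nonpos_of_nonneg (neg_nonpos.2 hc₂.le) (abs_nonneg _)
  obtain ⟨l, hl_nonneg, hl_le, hlim⟩ := hanti.exists_tendsto_atTop_of_le hx₂_nonneg
  have hl : l = 0 := by
    refine le_antisymm (nonpos_of_le_x₂_of_x₁_le hlam₁.le hc₁ hc₂ hx₁ hx₂ (B := K * x₂ t₀)
      (fun t ht => ?_) hl_le) hl_nonneg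
    exact (le_abs_self _).trans <| (hcone t ht).trans <|
      mul_le_mul_of_nonneg_left (hanti self_mem_Ici ht ht) hK.le
  refine ⟨fun t ht => ⟨hx₂_nonneg t ht, hanti self_mem_Ici ht ht⟩, ?_,
    l, ⟨hl_nonneg, hl_le t₀ le_rfl⟩, hlim⟩
  have hKx₂ : Tendsto (fun t => K * x₂ t) atTop (𝓝 0) := by simpa [hl] using hlim.const_mul K
  exact squeeze_zero_norm' ((eventually_ge_atTop t₀).mono hcone) hKx₂
end
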